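/- arXiv:1701.07818 — 2 statements merged into one kernel-verified Lean document; each statement's English description precedes it below -/
import Mathlib

section
/- For every real x one has Λ(x) ≤ Λ(π/6), i.e. the Lobachevsky function attains its maximum over ℝ at π/6; moreover Λ(π/6) = (3/2)·Λ(π/3). Consequently |Λ(x)| ≤ (3/2)Λ(π/3) for all real x. -/
/-!
Since `sin 2t = 2 sin t · sin (t + π/2)`, the integrand satisfies
`log|2 sin 2t| = log|2 sin t| + log|2 sin (t + π/2)|` off the zeros of `sin` and `cos`, which
integrates to the duplication formula `Λ(2x) = 2(Λ(x) + Λ(x + π/2) - Λ(π/2))`. At `x = π/2` it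
gives `Λ(π) = 0`, hence `Λ` is `π`-periodic and `Λ(π - x) = -Λ(x)`; at `x = π/6` it gives
`Λ(π/3) = 2Λ(π/6) - 2Λ(π/3)`.

As `Λ' = -log|2 sin x|`, on `[0, π]` the function `Λ` increases on `[0, π/6]`, decreases on
`[π/6, 5π/6]`, and on `[5π/6, π]` it equals `-Λ(π - x) ≤ 0 ≤ Λ(π/6)`.
-/

open Real

/-- The Lobachevsky function `Λ(x) = -∫₀ˣ log|2 sin t| dt`. -/
noncomputable def lob (x : ℝ) : ℝ := -∫ t in (0:ℝ)..x, Real.log |2 * Real.sin t|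

open MeasureTheory intervalIntegral Set

lemma intervalIntegrable_log_abs_two_mul_sin (a b : ℝ) :
    IntervalIntegrable (fun t => log |2 * sin t|) volume a b := by
  simp only [log_abs]
  exact (analyticOnNhd_const.mul analyticOnNhd_sin).meromorphicOn.intervalIntegrable_log

lemma lob_zero : lob 0 = 0 := by
  simp [lob]

lemma lob_sub_lob (a b : ℝ) : lob b - lob a = -∫ t in a..b, log |2 * sin t| := by
  rw [lob, lob, ← integral_add_adjacent_intervals (intervalIntegrable_log_abs_two_mul_sin 0 a)
    (intervalIntegrable_log_abs_two_mul_sin a b)]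
  ring

lemma log_abs_two_mul_sin_two_mul {t : ℝ} (hs : sin t ≠ 0) (hc : cos t ≠ 0) :
    log |2 * sin (2 * t)| = log |2 * sin t| + log |2 * sin (t + π / 2)| := by
  rw [sin_add_pi_div_two, ← log_mul (by positivity) (by positivity), ← abs_mul, sin_two_mul]
  ring_nf

lemma lob_two_mul (x : ℝ) : lob (2 * x) = 2 * (lob x + lob (x + π / 2) - lob (π / 2)) := by
  have hsin := analyticOnNhd_sin.preimage_zero_mem_codiscrete (x := π / 2) (by simp)
  have hcos := analyticOnNhd_cos.preimage_zero_mem_codiscrete (x := 0) (by simp)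
  have hsplit : ∫ t in (0:ℝ)..x, log |2 * sin (2 * t)| =
      ∫ t in (0:ℝ)..x, (log |2 * sin t| + log |2 * sin (t + π / 2)|) := by
    apply integral_congr_codiscreteWithin
    apply Filter.codiscreteWithin_mono (subset_univ _)
    filter_upwards [hsin, hcos] with t hs hc
    exact log_abs_two_mul_sin_two_mul hs hc
  have hshifted : IntervalIntegrable (fun t => log |2 * sin (t + π / 2)|) volume 0 x := by
    have := (intervalIntegrable_log_abs_two_mul_sin (0 + π / 2) (x + π / 2)).comp_add_right (π / 2)
    rwa [add_sub_cancel_right, add_sub_cancel_right] at this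
  rw [integral_add (intervalIntegrable_log_abs_two_mul_sin 0 x) hshifted,
    integral_comp_add_right (fun t => log |2 * sin t|), zero_add,
    integral_comp_mul_left (fun t => log |2 * sin t|) two_ne_zero, mul_zero, smul_eq_mul] at hsplit
  have hlob2x : lob (2 * x) = -∫ t in (0:ℝ)..2 * x, log |2 * sin t| := rfl
  have hlobx : lob x = -∫ t in (0:ℝ)..x, log |2 * sin t| := rfl
  linarith [lob_sub_lob (π / 2) (x + π / 2)]

lemma lob_pi : lob π = 0 := by
  have h := lob_two_mul (π / 2)
  rw [show 2 * (π / 2) = π by ring, show π / 2 + π / 2 = π by ring] at h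
  linarith

lemma lob_periodic : Function.Periodic lob π := by
  intro x
  have hperiodic : Function.Periodic (fun t => log |2 * sin t|) π := fun t => by
    simp only [sin_add_pi, mul_neg, abs_neg]
  have h := lob_sub_lob x (x + π)
  rw [hperiodic.intervalIntegral_add_eq x 0, zero_add, ← lob_sub_lob, lob_pi, lob_zero] at h
  linarith

lemma lob_neg (x : ℝ) : lob (-x) = -lob x := by
  have h := integral_comp_neg (fun t => log |2 * sin t|) (a := 0) (b := x)
  simp only [sin_neg, mul_neg, abs_neg, neg_zero] at h
  rw [lob, lob, neg_inj, h, integral_symm]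

lemma lob_pi_sub (x : ℝ) : lob (π - x) = -lob x := by
  rw [sub_eq_neg_add, lob_periodic, lob_neg]

lemma lob_pi_div_six : lob (π / 6) = 3 / 2 * lob (π / 3) := by
  have hhalf : lob (π / 2) = 0 := by
    have h := lob_pi_sub (π / 2)
    rw [show π - π / 2 = π / 2 by ring] at h
    linarith
  have h := lob_two_mul (π / 6)
  rw [show 2 * (π / 6) = π / 3 by ring, show π / 6 + π / 2 = π - π / 3 by ring] at h
  linarith [lob_pi_sub (π / 3)]

lemma lob_le_lob_of_abs_two_mul_sin_le_one {a b : ℝ} (hab : a ≤ b)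
    (h : ∀ t ∈ Icc a b, |2 * sin t| ≤ 1) : lob a ≤ lob b := by
  have := integral_nonneg (μ := volume) hab fun t ht =>
    neg_nonneg.2 (log_nonpos (abs_nonneg _) (h t ht))
  rw [intervalIntegral.integral_neg] at this
  linarith [lob_sub_lob a b]

lemma lob_le_lob_of_one_le_abs_two_mul_sin {a b : ℝ} (hab : a ≤ b)
    (h : ∀ t ∈ Icc a b, 1 ≤ |2 * sin t|) : lob b ≤ lob a := by
  have := integral_nonneg (μ := volume) hab fun t ht => log_nonneg (h t ht)
  linarith [lob_sub_lob a b]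

lemma lob_monotoneOn : MonotoneOn lob (Icc 0 (π / 6)) := by
  intro a ha b hb hab
  refine lob_le_lob_of_abs_two_mul_sin_le_one hab fun t ht => ?_
  have hπ := pi_pos
  have hsin_nonneg : 0 ≤ sin t :=
    sin_nonneg_of_nonneg_of_le_pi (ha.1.trans ht.1) (by linarith [hb.2, ht.2])
  have hsin_le : sin t ≤ 1 / 2 := sin_pi_div_six ▸
    sin_le_sin_of_le_of_le_pi_div_two (by linarith [ha.1, ht.1]) (by linarith) (ht.2.trans hb.2)
  rw [abs_of_nonneg (by positivity)]
  linarith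

lemma lob_antitoneOn : AntitoneOn lob (Icc (π / 6) (5 * π / 6)) := by
  intro a ha b hb hab
  refine lob_le_lob_of_one_le_abs_two_mul_sin hab fun t ht => ?_
  have hsin : 1 / 2 ≤ sin t := by
    rw [← cos_pi_div_three, ← cos_pi_div_two_sub, ← cos_abs (π / 2 - t)]
    refine cos_le_cos_of_nonneg_of_le_pi (abs_nonneg _) (by linarith [pi_pos])
      (abs_le.2 ⟨?_, ?_⟩) <;> linarith [ha.1, hb.2, ht.1, ht.2]
  rw [abs_of_nonneg (by linarith)]
  linarith

lemma lob_le_lob_pi_div_six_of_mem_Ico {y : ℝ} (hy : y ∈ Ico 0 π) : lob y ≤ lob (π / 6) := by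
  have hπ := pi_pos
  rcases le_total y (π / 6) with h1 | h1
  · exact lob_monotoneOn ⟨hy.1, h1⟩ ⟨by positivity, le_rfl⟩ h1
  rcases le_total y (5 * π / 6) with h2 | h2
  · exact lob_antitoneOn ⟨le_rfl, by linarith⟩ ⟨h1, h2⟩ h1
  have hreflected := lob_monotoneOn ⟨le_rfl, by positivity⟩ ⟨by linarith [hy.2], by linarith⟩
    (by linarith [hy.2] : 0 ≤ π - y)
  have hmax := lob_monotoneOn ⟨le_rfl, by positivity⟩ ⟨by positivity, le_rfl⟩
    (by positivity : 0 ≤ π / 6)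
  rw [lob_pi_sub, lob_zero] at hreflected
  rw [lob_zero] at hmax
  linarith

lemma lob_le_lob_pi_div_six (x : ℝ) : lob x ≤ lob (π / 6) := by
  obtain ⟨y, hy, hxy⟩ := lob_periodic.exists_mem_Ico₀ pi_pos x
  exact hxy ▸ lob_le_lob_pi_div_six_of_mem_Ico hy

/-- The Lobachevsky function attains its maximum over `ℝ` at `π/6`, where
`Λ(π/6) = (3/2)Λ(π/3)`; consequently `|Λ(x)| ≤ (3/2)Λ(π/3)` for all `x`. -/
theorem stmt12 :
    (∀ x : ℝ, lob x ≤ lob (π/6)) ∧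
      lob (π/6) = (3/2) * lob (π/3) ∧
      ∀ x : ℝ, |lob x| ≤ (3/2) * lob (π/3) := by
  refine ⟨lob_le_lob_pi_div_six, lob_pi_div_six, fun x => ?_⟩
  rw [← lob_pi_div_six, abs_le, neg_le]
  exact ⟨lob_neg x ▸ lob_le_lob_pi_div_six (-x), lob_le_lob_pi_div_six x⟩
end

section
/- Let r ≥ 3 be an odd integer and A ∈ ℂ a primitive 2r-th root of unity. If (i,j,k,l,m,n) ∈ I_r⁶ is an admissible 6-tuple, then (i′,j′,k,l′,m′,n) is also an admissible 6-tuple, and the quantum 6j-symbols agree: |i′ j′ k; l′ m′ n| = |i j k; l m n|. -/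
/-- The quantum integer `[n] = (A^{2n} − A^{−2n})/(A² − A^{−2})`. -/
noncomputable def qint (A : ℂ) (n : ℤ) : ℂ :=
  (A^(2*n) - A^(-(2*n))) / (A^(2:ℤ) - A^(-2:ℤ))

/-- The quantum factorial `[n]! = ∏_{k=1}^{n} [k]`, with `[0]! = 1`. -/
noncomputable def qfact (A : ℂ) (n : ℕ) : ℂ := ∏ k ∈ Finset.Icc 1 n, qint A k

/-- A triple `(i,j,k) ∈ I_r³` is admissible if `i+j ≥ k`, `j+k ≥ i`, `k+i ≥ j`,
`i+j+k` is even and `i+j+k ≤ 2(r−2)`. -/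
def triAdm (r i j k : ℕ) : Prop :=
  k ≤ i + j ∧ i ≤ j + k ∧ j ≤ k + i ∧ Even (i + j + k) ∧ i + j + k ≤ 2*(r-2)

/-- A 6-tuple `(i,j,k,l,m,n) ∈ I_r⁶` is admissible if the triples `(i,j,k)`, `(j,l,n)`,
`(i,m,n)`, `(k,l,m)` are admissible. -/
def sixAdm (r i j k l m n : ℕ) : Prop :=
  triAdm r i j k ∧ triAdm r j l n ∧ triAdm r i m n ∧ triAdm r k l m

/-- The quantum 6j-symbol
`|i j k; l m n| = Σ_{z=max T_a}^{min Q_b} (−1)^z [z+1]! / (∏_a [z−T_a]! ∏_b [Q_b−z]!)`,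
where `T₁=(i+j+k)/2, T₂=(i+m+n)/2, T₃=(j+l+n)/2, T₄=(k+l+m)/2`,
`Q₁=(i+j+l+m)/2, Q₂=(i+k+l+n)/2, Q₃=(j+k+m+n)/2`. -/
noncomputable def sixj (A : ℂ) (i j k l m n : ℕ) : ℂ :=
  ∑ z ∈ Finset.Icc
      (max (max ((i+j+k)/2) ((i+m+n)/2)) (max ((j+l+n)/2) ((k+l+m)/2)))
      (min (min ((i+j+l+m)/2) ((i+k+l+n)/2)) ((j+k+m+n)/2)),
    (-1:ℂ)^z * qfact A (z+1) /
      (qfact A (z - (i+j+k)/2) * qfact A (z - (i+m+n)/2) *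
        qfact A (z - (j+l+n)/2) * qfact A (z - (k+l+m)/2) *
        qfact A ((i+j+l+m)/2 - z) * qfact A ((i+k+l+n)/2 - z) *
        qfact A ((j+k+m+n)/2 - z))


/-!
At a primitive `2r`-th root of unity `[r - t] = -[t]`, hence `[r] = 0` and
`[a]! [b]! = (-1)^a [r-1]!` whenever `a + b = r - 1`; for odd `r` the factorials `[t]!` with
`t < r` do not vanish. Complementing `i, j, l, m` corresponds to the index shift
`z' = z + (r-2) - Q₁`, under which the `[z - Tₐ]!` and `[Q₂ - z]!, [Q₃ - z]!` are permuted
among themselves, while `[z+1]!, [Q₁ - z]!` are traded for `[z'+1]!, [r-2-z]!`; both products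
`[z'+1]! [Q₁-z]!` and `[z+1]! [r-2-z]!` equal `-[r-1]!` up to the signs `(-1)^z'`, `(-1)^z`,
so the summands agree. The two summation ranges match once the terms with `z ≥ r - 1`, which
vanish because `[z+1]!` contains `[r] = 0`, are dropped.
-/

open Finset

section QuantumIntegers

variable {A : ℂ} {r : ℕ}

theorem IsPrimitiveRoot.zpow_two_mul_natCast_eq_one (hA : IsPrimitiveRoot A (2 * r)) :
    A ^ (2 * (r : ℤ)) = 1 := by
  exact_mod_cast hA.zpow_eq_one

theorem qint_sub (hA : IsPrimitiveRoot A (2 * r)) (hr : 0 < r) (t : ℤ) :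
    qint A (r - t) = -qint A t := by
  have hA0 : A ≠ 0 := hA.ne_zero (by omega)
  have hAr := hA.zpow_two_mul_natCast_eq_one
  have e₁ : A ^ (2 * ((r : ℤ) - t)) = A ^ (-(2 * t)) := by
    rw [show 2 * ((r : ℤ) - t) = 2 * r + -(2 * t) by ring, zpow_add₀ hA0, hAr, one_mul]
  have e₂ : A ^ (-(2 * ((r : ℤ) - t))) = A ^ (2 * t) := by
    rw [show -(2 * ((r : ℤ) - t)) = -(2 * r) + 2 * t by ring, zpow_add₀ hA0, zpow_neg, hAr,
      inv_one, one_mul]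
  rw [qint, qint, e₁, e₂]
  ring

theorem qint_natCast_self (hA : IsPrimitiveRoot A (2 * r)) : qint A r = 0 := by
  simp [qint, zpow_neg, hA.zpow_two_mul_natCast_eq_one]

theorem zpow_two_mul_ne_zpow_neg (hodd : Odd r) (hA : IsPrimitiveRoot A (2 * r))
    {s : ℕ} (hs₀ : 0 < s) (hsr : s < r) : A ^ (2 * (s : ℤ)) ≠ A ^ (-(2 * (s : ℤ))) := by
  intro h
  have hA0 : A ≠ 0 := hA.ne_zero (by omega)
  have h4 : A ^ (2 * (s : ℤ) + 2 * s) = 1 := by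
    rw [zpow_add₀ hA0]
    nth_rw 1 [h]
    rw [← zpow_add₀ hA0, neg_add_cancel, zpow_zero]
  have h2 : r ∣ 2 * s := by
    rw [hA.zpow_eq_one_iff_dvd,
      show 2 * (s : ℤ) + 2 * s = ((2 * (2 * s) : ℕ) : ℤ) by push_cast; ring,
      Int.natCast_dvd_natCast] at h4
    exact Nat.dvd_of_mul_dvd_mul_left two_pos h4
  have hrs : r ∣ s := (Nat.coprime_two_right.mpr hodd).dvd_of_dvd_mul_left h2
  exact absurd (Nat.le_of_dvd hs₀ hrs) (by omega)

theorem qint_natCast_ne_zero (hodd : Odd r) (hA : IsPrimitiveRoot A (2 * r))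
    {t : ℕ} (ht₀ : 0 < t) (htr : t < r) : qint A t ≠ 0 := by
  refine div_ne_zero (sub_ne_zero.mpr (zpow_two_mul_ne_zpow_neg hodd hA ht₀ htr)) ?_
  simpa using sub_ne_zero.mpr (zpow_two_mul_ne_zpow_neg hodd hA one_pos (by omega))

theorem qfact_succ (t : ℕ) : qfact A (t + 1) = qfact A t * qint A (t + 1 : ℕ) :=
  prod_Icc_succ_top (by omega) _

theorem qfact_ne_zero (hodd : Odd r) (hA : IsPrimitiveRoot A (2 * r)) {t : ℕ} (ht : t < r) :
    qfact A t ≠ 0 :=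
  prod_ne_zero_iff.mpr fun k hk => by
    rw [mem_Icc] at hk
    exact qint_natCast_ne_zero hodd hA (by omega) (by omega)

theorem qfact_eq_zero (hA : IsPrimitiveRoot A (2 * r)) (hr : 0 < r) {t : ℕ} (ht : r ≤ t) :
    qfact A t = 0 :=
  prod_eq_zero (mem_Icc.mpr ⟨hr, ht⟩) (qint_natCast_self hA)

theorem qfact_mul_qfact_of_add_eq (hA : IsPrimitiveRoot A (2 * r)) {a b : ℕ}
    (hab : a + b + 1 = r) : qfact A a * qfact A b = (-1) ^ a * qfact A (r - 1) := by
  induction a generalizing b with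
  | zero => simp [qfact, show b = r - 1 by omega]
  | succ a ih =>
    have hb : qint A (b + 1 : ℕ) = -qint A (a + 1 : ℕ) := by
      rw [show ((b + 1 : ℕ) : ℤ) = r - ((a + 1 : ℕ) : ℤ) by omega, qint_sub hA (by omega)]
    have := ih (b := b + 1) (by omega)
    rw [qfact_succ b, hb] at this
    rw [qfact_succ a]
    linear_combination -this

end QuantumIntegers

section SixjSum

variable {A : ℂ} {r : ℕ}

theorem neg_one_pow_mul_qfact_succ_mul_qfact (hA : IsPrimitiveRoot A (2 * r)) {a b : ℕ}
    (hab : a + b + 2 = r) : (-1) ^ a * qfact A (a + 1) * qfact A b = -qfact A (r - 1) := by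
  have hsq : ((-1 : ℂ) ^ a) * (-1) ^ a = 1 := by rw [← mul_pow]; norm_num
  rw [mul_assoc, qfact_mul_qfact_of_add_eq hA (by omega)]
  linear_combination (-(qfact A (r - 1))) * hsq

noncomputable def sixjTerm (A : ℂ) (T₁ T₂ T₃ T₄ Q₁ Q₂ Q₃ z : ℕ) : ℂ :=
  (-1) ^ z * qfact A (z + 1) /
    (qfact A (z - T₁) * qfact A (z - T₂) * qfact A (z - T₃) * qfact A (z - T₄) *
      qfact A (Q₁ - z) * qfact A (Q₂ - z) * qfact A (Q₃ - z))

noncomputable def sixjSum (A : ℂ) (T₁ T₂ T₃ T₄ Q₁ Q₂ Q₃ : ℕ) : ℂ :=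
  ∑ z ∈ Icc (max (max T₁ T₂) (max T₃ T₄)) (min (min Q₁ Q₂) Q₃),
    sixjTerm A T₁ T₂ T₃ T₄ Q₁ Q₂ Q₃ z

theorem sixj_eq_sixjSum (A : ℂ) (i j k l m n : ℕ) :
    sixj A i j k l m n =
      sixjSum A ((i+j+k)/2) ((i+m+n)/2) ((j+l+n)/2) ((k+l+m)/2)
        ((i+j+l+m)/2) ((i+k+l+n)/2) ((j+k+m+n)/2) :=
  rfl

theorem sixjTerm_eq_zero (hA : IsPrimitiveRoot A (2 * r)) (hr : 0 < r)
    (T₁ T₂ T₃ T₄ Q₁ Q₂ Q₃ : ℕ) {z : ℕ} (hz : r ≤ z + 1) :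
    sixjTerm A T₁ T₂ T₃ T₄ Q₁ Q₂ Q₃ z = 0 := by
  rw [sixjTerm, qfact_eq_zero hA hr hz, mul_zero, zero_div]

variable {T₁ T₂ T₃ T₄ Q₁ Q₂ Q₃ T₁' T₂' T₃' T₄' Q₁' Q₂' Q₃' c : ℕ}

theorem sixjTerm_reflect (hodd : Odd r) (hA : IsPrimitiveRoot A (2 * r)) (hc : c + 2 = r)
    (hT₁ : T₁' + Q₁ = T₄ + c) (hT₂ : T₂' + Q₁ = T₃ + c) (hT₃ : T₃' + Q₁ = T₂ + c)
    (hT₄ : T₄' + Q₁ = T₁ + c) (hQ₁ : Q₁' + Q₁ = c + c) (hQ₂ : Q₂' + Q₁ = Q₃ + c)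
    (hQ₃ : Q₃' + Q₁ = Q₂ + c) {z z' : ℕ} (hz : z' + Q₁ = z + c) (hzQ : z ≤ Q₁) (hzc : z ≤ c) :
    sixjTerm A T₁' T₂' T₃' T₄' Q₁' Q₂' Q₃' z' = sixjTerm A T₁ T₂ T₃ T₄ Q₁ Q₂ Q₃ z := by
  have key : (-1) ^ z' * qfact A (z' + 1) / qfact A (c - z) =
      (-1) ^ z * qfact A (z + 1) / qfact A (Q₁ - z) := by
    rw [div_eq_div_iff (qfact_ne_zero hodd hA (by omega)) (qfact_ne_zero hodd hA (by omega)),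
      neg_one_pow_mul_qfact_succ_mul_qfact hA (by omega),
      neg_one_pow_mul_qfact_succ_mul_qfact hA (by omega)]
  rw [sixjTerm, sixjTerm, show z' - T₁' = z - T₄ by omega, show z' - T₂' = z - T₃ by omega,
    show z' - T₃' = z - T₂ by omega, show z' - T₄' = z - T₁ by omega,
    show Q₁' - z' = c - z by omega, show Q₂' - z' = Q₃ - z by omega,
    show Q₃' - z' = Q₂ - z by omega]
  calc _ = (-1) ^ z' * qfact A (z' + 1) / qfact A (c - z) /
        (qfact A (z - T₁) * qfact A (z - T₂) * qfact A (z - T₃) * qfact A (z - T₄) *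
          qfact A (Q₂ - z) * qfact A (Q₃ - z)) := by ring
    _ = _ := by rw [key]; ring

theorem sum_Icc_min_eq_sum_Icc {M : Type*} [AddCommMonoid M] {f : ℕ → M} {c : ℕ}
    (hf : ∀ z, c < z → f z = 0) (a b : ℕ) :
    ∑ z ∈ Icc a (min b c), f z = ∑ z ∈ Icc a b, f z :=
  sum_subset (Icc_subset_Icc le_rfl (min_le_left _ _)) fun z hz hz' => by
    simp only [mem_Icc] at hz hz'
    exact hf z (by omega)

theorem sum_Icc_eq_sum_Icc_of_add_eq {M : Type*} [AddCommMonoid M] {f g : ℕ → M}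
    {a b a' b' d e : ℕ} (ha : a' + d = a + e) (hb : b' + d = b + e)
    (hfg : ∀ z ∈ Icc a b, f (z + e - d) = g z) :
    ∑ z ∈ Icc a' b', f z = ∑ z ∈ Icc a b, g z := by
  refine sum_nbij' (fun z' => z' + d - e) (fun z => z + e - d)
    (fun z hz => by rw [mem_Icc] at hz ⊢; omega) (fun z hz => by rw [mem_Icc] at hz ⊢; omega)
    (fun z hz => by rw [mem_Icc] at hz; omega) (fun z hz => by rw [mem_Icc] at hz; omega)
    fun z hz => ?_
  rw [mem_Icc] at hz
  rw [← hfg _ (mem_Icc.mpr (by omega))]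
  congr 1
  omega

theorem sixjSum_reflect (hodd : Odd r) (hA : IsPrimitiveRoot A (2 * r)) (hc : c + 2 = r)
    (hT₁ : T₁' + Q₁ = T₄ + c) (hT₂ : T₂' + Q₁ = T₃ + c) (hT₃ : T₃' + Q₁ = T₂ + c)
    (hT₄ : T₄' + Q₁ = T₁ + c) (hQ₁ : Q₁' + Q₁ = c + c) (hQ₂ : Q₂' + Q₁ = Q₃ + c)
    (hQ₃ : Q₃' + Q₁ = Q₂ + c) :
    sixjSum A T₁' T₂' T₃' T₄' Q₁' Q₂' Q₃' = sixjSum A T₁ T₂ T₃ T₄ Q₁ Q₂ Q₃ := by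
  have hvanish (T₁ T₂ T₃ T₄ Q₁ Q₂ Q₃ z : ℕ) (hz : c < z) :
      sixjTerm A T₁ T₂ T₃ T₄ Q₁ Q₂ Q₃ z = 0 :=
    sixjTerm_eq_zero hA (by omega) _ _ _ _ _ _ _ (by omega)
  rw [sixjSum, sixjSum, ← sum_Icc_min_eq_sum_Icc (hvanish T₁' T₂' T₃' T₄' Q₁' Q₂' Q₃'),
    ← sum_Icc_min_eq_sum_Icc (hvanish T₁ T₂ T₃ T₄ Q₁ Q₂ Q₃)]
  have ha : max (max T₁' T₂') (max T₃' T₄') + Q₁ = max (max T₁ T₂) (max T₃ T₄) + c := by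
    simp only [← max_add_add_right, hT₁, hT₂, hT₃, hT₄]
    ac_rfl
  have hb : min (min (min Q₁' Q₂') Q₃') c + Q₁ = min (min (min Q₁ Q₂) Q₃) c + c := by
    simp only [← min_add_add_right, hQ₁, hQ₂, hQ₃, add_comm c Q₁]
    simp only [min_comm, min_left_comm]
  refine sum_Icc_eq_sum_Icc_of_add_eq (d := Q₁) (e := c) ha hb fun z hz => ?_
  simp only [mem_Icc, max_le_iff, le_min_iff] at hz
  exact sixjTerm_reflect hodd hA hc hT₁ hT₂ hT₃ hT₄ hQ₁ hQ₂ hQ₃ (by omega) (by omega) (by omega)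

end SixjSum

theorem triAdm.rotate {r i j k : ℕ} (h : triAdm r i j k) : triAdm r j k i := by
  obtain ⟨h₁, h₂, h₃, h₄, h₅⟩ := h
  exact ⟨h₂, h₃, h₁, by rwa [show j + k + i = i + j + k by ring], by omega⟩

theorem triAdm.compl {r i j k : ℕ} (h : triAdm r i j k) : triAdm r (r - 2 - i) (r - 2 - j) k := by
  obtain ⟨h₁, h₂, h₃, ⟨p, hp⟩, h₅⟩ := h
  exact ⟨by omega, by omega, by omega, ⟨r - 2 - p + k, by omega⟩, by omega⟩

theorem sixAdm.compl {r i j k l m n : ℕ} (h : sixAdm r i j k l m n) :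
    sixAdm r (r - 2 - i) (r - 2 - j) k (r - 2 - l) (r - 2 - m) n :=
  ⟨h.1.compl, h.2.1.compl, h.2.2.1.compl, h.2.2.2.rotate.compl.rotate.rotate⟩

theorem stmt17_general (r : ℕ) (hodd : Odd r) (hr : 3 ≤ r) (A : ℂ)
    (hA : IsPrimitiveRoot A (2*r)) (i j k l m n : ℕ)
    (h : sixAdm r i j k l m n) :
    sixAdm r (r-2-i) (r-2-j) k (r-2-l) (r-2-m) n ∧
      sixj A (r-2-i) (r-2-j) k (r-2-l) (r-2-m) n = sixj A i j k l m n := by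
  refine ⟨h.compl, ?_⟩
  simp only [sixAdm, triAdm, Nat.even_iff] at h
  rw [sixj_eq_sixjSum, sixj_eq_sixjSum]
  apply sixjSum_reflect hodd hA (c := r - 2) <;> omega

/-- For `r ≥ 3` odd and `A` a primitive `2r`-th root of unity: if
`(i,j,k,l,m,n) ∈ I_r⁶` is admissible then so is `(i′,j′,k,l′,m′,n)`, where
`x′ = r−2−x`, and the quantum 6j-symbols agree. -/
theorem stmt17 (r : ℕ) (hodd : Odd r) (hr : 3 ≤ r) (A : ℂ)
    (hA : IsPrimitiveRoot A (2*r)) (i j k l m n : ℕ)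
    (hi : i ≤ r - 2) (hj : j ≤ r - 2) (hk : k ≤ r - 2)
    (hl : l ≤ r - 2) (hm : m ≤ r - 2) (hn : n ≤ r - 2)
    (h : sixAdm r i j k l m n) :
    sixAdm r (r-2-i) (r-2-j) k (r-2-l) (r-2-m) n ∧
      sixj A (r-2-i) (r-2-j) k (r-2-l) (r-2-m) n = sixj A i j k l m n :=
  stmt17_general r hodd hr A hA i j k l m n h
end
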